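/- Let Cl = Z^9 with basis L, E_1, ..., E_8 and K = -3L + E_1 + ... + E_8, and let K^⊥ be the orthogonal complement of K under the standard blow-up form. Let S = {L-E_1-E_2-E_3, L-E_1-E_4-E_6, L-E_1-E_5-E_7, L-E_2-E_4-E_7, L-E_2-E_5-E_6, L-E_3-E_4-E_5, L-E_3-E_6-E_7} be the set of seven classes L - E_a - E_b - E_c corresponding to the lines abc, adf, aeg, bdg, bef, cde, cfg of the Fano plane on points {1,...,7}. Then the quotient group K^⊥ / ⟨S⟩ has torsion subgroup isomorphic to (Z/2Z)³. -/
import Mathlib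

open Finset

/-- `Cl8 = ℤ^9` represented as pairs `(d, e)` standing for `d·L + ∑ i, e i · E i`. -/
abbrev Cl8 := ℤ × (Fin 8 → ℤ)

/-- The blow-up intersection form: `L·L = 1`, `E i · E i = -1`, distinct basis vectors
orthogonal. -/
def form (u v : Cl8) : ℤ := u.1 * v.1 - ∑ i, u.2 i * v.2 i

/-- The canonical class `K = -3L + E_1 + ⋯ + E_8`. -/
def K8 : Cl8 := (-3, fun _ => 1)

/-- The class `L - E a - E b - E c`. -/
def fanoLine (a b c : Fin 8) : Cl8 :=
  (1, fun i => if i = a ∨ i = b ∨ i = c then -1 else 0)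

/-- The seven Fano-line classes (on the first seven points). -/
def fanoS : Set Cl8 :=
  {fanoLine 0 1 2, fanoLine 0 3 5, fanoLine 0 4 6, fanoLine 1 3 6,
   fanoLine 1 4 5, fanoLine 2 3 4, fanoLine 2 5 6}

/-- The orthogonal complement `K^⊥ = {v : v·K = 0}`. -/
def Kperp : Submodule ℤ Cl8 where
  carrier := {v | form v K8 = 0}
  add_mem' := by
    intro a b ha hb
    simp only [Set.mem_setOf_eq, form, K8, Prod.fst_add, Prod.snd_add, Pi.add_apply,
      add_mul, Finset.sum_add_distrib] at *
    linarith
  zero_mem' := by simp [form, K8]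
  smul_mem' := by
    intro c v hv
    simp only [Set.mem_setOf_eq, form, K8, Prod.smul_fst, Prod.smul_snd, Pi.smul_apply,
      smul_eq_mul, mul_assoc, ← Finset.mul_sum] at *
    rw [← mul_sub, hv, mul_zero]

/-- The quotient `K^⊥ / ⟨S⟩` of `K^⊥` by the subgroup generated by the Fano lines. -/
abbrev fanoQuot := Kperp ⧸ (Submodule.span ℤ fanoS).comap Kperp.subtype

/- ---------------- auxiliary machinery ---------------- -/

abbrev M3 := ZMod 2 × ZMod 2 × ZMod 2

def fx5 (v : Cl8) : ℤ := v.1 + v.2 1 + v.2 4 + v.2 5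
def fx6 (v : Cl8) : ℤ := v.1 + v.2 2 + v.2 3 + v.2 4
def fx7 (v : Cl8) : ℤ := v.1 + v.2 2 + v.2 5 + v.2 6 + v.2 7
def fx8 (v : Cl8) : ℤ := -v.2 7

def Fhom : Cl8 →+ ℤ × M3 :=
  AddMonoidHom.mk' (fun v => (fx8 v, ((fx5 v : ZMod 2), (fx6 v : ZMod 2), (fx7 v : ZMod 2)))) (by
    intro a b
    simp only [fx5, fx6, fx7, fx8, Prod.fst_add, Prod.snd_add, Pi.add_apply, Prod.mk_add_mk]
    refine Prod.ext ?_ (Prod.ext ?_ (Prod.ext ?_ ?_)) <;> push_cast <;> ring)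

def FF : Kperp →ₗ[ℤ] ℤ × M3 := Fhom.toIntLinearMap.comp Kperp.subtype

lemma span_le_ker : Submodule.span ℤ fanoS ≤ LinearMap.ker Fhom.toIntLinearMap := by
  rw [Submodule.span_le]
  intro w hw
  simp only [fanoS, Set.mem_insert_iff, Set.mem_singleton_iff] at hw
  rcases hw with rfl | rfl | rfl | rfl | rfl | rfl | rfl <;>
    · show Fhom _ = 0
      simp only [Fhom, fanoLine, AddMonoidHom.mk'_apply, fx5, fx6, fx7, fx8]
      norm_num
      decide

lemma ker_eq : (Submodule.span ℤ fanoS).comap Kperp.subtype = LinearMap.ker FF := by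
  apply le_antisymm
  · intro v hv
    exact span_le_ker hv
  · intro v hv
    simp only [LinearMap.mem_ker, FF, LinearMap.comp_apply, Submodule.subtype_apply,
      AddMonoidHom.coe_toIntLinearMap, Fhom, AddMonoidHom.mk'_apply, Prod.mk_eq_zero,
      Prod.mk.injEq] at hv
    obtain ⟨h8, h5, h6, h7⟩ := hv
    have hK : form (v : Cl8) K8 = 0 := v.2
    simp only [form, K8, Fin.sum_univ_eight, mul_one] at hK
    have d5 : (2 : ℤ) ∣ fx5 (v : Cl8) := by
      exact_mod_cast (ZMod.intCast_zmod_eq_zero_iff_dvd _ 2).mp h5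
    have d6 : (2 : ℤ) ∣ fx6 (v : Cl8) := by
      exact_mod_cast (ZMod.intCast_zmod_eq_zero_iff_dvd _ 2).mp h6
    have d7 : (2 : ℤ) ∣ fx7 (v : Cl8) := by
      exact_mod_cast (ZMod.intCast_zmod_eq_zero_iff_dvd _ 2).mp h7
    obtain ⟨m5, hm5⟩ := d5
    obtain ⟨m6, hm6⟩ := d6
    obtain ⟨m7, hm7⟩ := d7
    simp only [fx5, fx6, fx7, fx8, neg_eq_zero] at hm5 hm6 hm7 h8
    show (v : Cl8) ∈ Submodule.span ℤ fanoS
    set w : Cl8 := (v : Cl8) with hw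
    set d := w.1
    set e0 := w.2 0; set e1 := w.2 1; set e2 := w.2 2; set e3 := w.2 3
    set e4 := w.2 4; set e5 := w.2 5; set e6 := w.2 6; set e7 := w.2 7
    have key : w =
        (2*d + e2 + e3 + e4 + e5 + e6 + e7 - m6 - m7) • fanoLine 0 1 2
      + (e1 - e2 - e3 - m5 + 2*m6 + m7) • fanoLine 0 3 5
      + (d + e2 + e3 + m5 - m6) • fanoLine 0 4 6
      + (-2*d - e1 - e2 - e3 - e4 - e5 - e6 - e7 + m5 + m6 + m7) • fanoLine 1 3 6
      + (-m5) • fanoLine 1 4 5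
      + (-m6) • fanoLine 2 3 4
      + (-m7) • fanoLine 2 5 6 := by
      refine Prod.ext ?_ (funext fun i => ?_)
      · simp only [Prod.fst_add, Prod.smul_fst, fanoLine, smul_eq_mul, mul_one]
        linarith
      · fin_cases i <;>
          simp only [Prod.snd_add, Prod.smul_snd, Pi.add_apply, Pi.smul_apply, fanoLine,
            smul_eq_mul] <;>
          simp (config := { decide := true }) [Fin.isValue] <;> linarith
    rw [key]
    have mem : ∀ u ∈ fanoS, u ∈ Submodule.span ℤ fanoS := fun u hu => Submodule.subset_span hu
    refine Submodule.add_mem _ (Submodule.add_mem _ (Submodule.add_mem _ (Submodule.add_mem _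
      (Submodule.add_mem _ (Submodule.add_mem _ ?_ ?_) ?_) ?_) ?_) ?_) ?_ <;>
      exact Submodule.smul_mem _ _ (mem _ (by simp [fanoS]))

def bb5 : Kperp := ⟨(0, ![0, 0, 0, 0, 0, 1, -1, 0]), by
  show form _ K8 = 0; decide⟩
def bb6 : Kperp := ⟨(0, ![0, 0, 1, -1, 1, -1, 0, 0]), by
  show form _ K8 = 0; decide⟩
def bb7 : Kperp := ⟨(0, ![0, 0, 1, -1, 0, 0, 0, 0]), by
  show form _ K8 = 0; decide⟩
def bb8 : Kperp := ⟨(0, ![0, 0, 0, 0, 0, 0, 1, -1]), by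
  show form _ K8 = 0; decide⟩

lemma FF_surj : Function.Surjective FF := by
  have e5 : FF bb5 = ((0 : ℤ), ((1 : ZMod 2), 0, 0)) := by decide
  have e6 : FF bb6 = ((0 : ℤ), ((0 : ZMod 2), 1, 0)) := by decide
  have e7 : FF bb7 = ((0 : ℤ), ((0 : ZMod 2), 0, 1)) := by decide
  have e8 : FF bb8 = ((1 : ℤ), ((0 : ZMod 2), 0, 0)) := by decide
  rintro ⟨a, t, u, w⟩
  refine ⟨a • bb8 + (t.val : ℤ) • bb5 + (u.val : ℤ) • bb6 + (w.val : ℤ) • bb7, ?_⟩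
  rw [map_add, map_add, map_add, map_smul, map_smul, map_smul, map_smul, e5, e6, e7, e8]
  refine Prod.ext ?_ (Prod.ext ?_ (Prod.ext ?_ ?_)) <;>
    simp [Prod.smul_fst, Prod.smul_snd, zsmul_eq_mul, ZMod.natCast_rightInverse t,
      ZMod.natCast_rightInverse u, ZMod.natCast_rightInverse w]

noncomputable def bigEquiv : fanoQuot ≃ₗ[ℤ] ℤ × M3 :=
  (Submodule.quotEquivOfEq _ _ ker_eq).trans (FF.quotKerEquivOfSurjective FF_surj)

lemma two_smul_M3 (m : M3) : (2 : ℕ) • ((0 : ℤ), m) = 0 := by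
  refine Prod.ext ?_ ?_
  · simp
  · show (2 : ℕ) • m = 0
    revert m; decide

/-- The torsion subgroup of `K^⊥ / ⟨S⟩` is `(ℤ/2ℤ)³`. -/
theorem fano_torsion :
    Nonempty ((AddCommGroup.torsion fanoQuot) ≃+ (ZMod 2 × ZMod 2 × ZMod 2)) := by
  classical
  let E : fanoQuot ≃+ ℤ × M3 := bigEquiv.toAddEquiv
  have keyfst : ∀ x : fanoQuot, IsOfFinAddOrder x → (E x).1 = 0 := by
    intro x hx
    have h2 : IsOfFinAddOrder (E x) := E.toAddMonoidHom.isOfFinAddOrder hx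
    have h3 : IsOfFinAddOrder (E x).1 :=
      (AddMonoidHom.fst ℤ M3).isOfFinAddOrder h2
    obtain ⟨n, hn, h0⟩ := isOfFinAddOrder_iff_nsmul_eq_zero.mp h3
    have : (n : ℤ) * (E x).1 = 0 := by rwa [← nsmul_eq_mul]
    rcases mul_eq_zero.mp this with h | h
    · exact absurd h (by exact_mod_cast hn.ne')
    · exact h
  have memtor : ∀ m : M3, E.symm ((0 : ℤ), m) ∈ AddCommGroup.torsion fanoQuot := by
    intro m
    show IsOfFinAddOrder _
    refine E.symm.toAddMonoidHom.isOfFinAddOrder ?_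
    exact isOfFinAddOrder_iff_nsmul_eq_zero.mpr ⟨2, two_pos, two_smul_M3 m⟩
  refine ⟨{
    toFun := fun x => (E x.1).2
    invFun := fun m => ⟨E.symm ((0 : ℤ), m), memtor m⟩
    left_inv := ?_
    right_inv := ?_
    map_add' := ?_ }⟩
  · rintro ⟨x, hx⟩
    ext
    show E.symm ((0 : ℤ), (E x).2) = x
    have : ((0 : ℤ), (E x).2) = E x := Prod.ext (keyfst x hx).symm rfl
    rw [this, E.symm_apply_apply]
  · intro m
    show (E (E.symm ((0 : ℤ), m))).2 = m
    rw [E.apply_symm_apply]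
  · rintro ⟨x, hx⟩ ⟨y, hy⟩
    show (E (x + y)).2 = (E x).2 + (E y).2
    rw [map_add]
    rfl
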